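/- arXiv:1410.3269 — 3 statements merged into one kernel-verified Lean document; each statement's English description precedes it below -/
import Mathlib

section
/- Let F₂ be the free group on x₁, x₂ and t₁ ∈ Aut(F₂) the automorphism with t₁(x₁) = x₁⁻¹, t₁(x₂) = x₂. If t₂ ∈ Aut(F₂) commutes with t₁, then t₂(x₂) = x₂^{ε} for some ε ∈ {1, -1} and t₂(x₁) = x₂ᵏ x₁^{δ} x₂⁻ᵏ for some integer k and δ ∈ {1, -1}. -/
open FreeGroup List

namespace CAF

abbrev F2 := FreeGroup (Fin 2)
abbrev Ltr := Fin 2 × Bool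

def R (p q : Ltr) : Prop := ¬(p.1 = q.1 ∧ p.2 = !q.2)

def IsRed (L : List Ltr) : Prop := List.Chain' R L

theorem reduce_eq_self_of_isRed {L : List Ltr} (h : IsRed L) : FreeGroup.reduce L = L := by
  induction L with
  | nil => rfl
  | cons p T ih =>
    have hT : FreeGroup.reduce T = T := ih h.tail
    rw [FreeGroup.reduce.cons, hT]
    cases T with
    | nil => rfl
    | cons q T' =>
      have hR : R p q := (List.isChain_cons_cons.1 h).1
      simp only [R] at hR
      simp [hR]

theorem isRed_of_reduce_eq_self {L : List Ltr} (h : FreeGroup.reduce L = L) : IsRed L := by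
  induction L with
  | nil => exact List.isChain_nil
  | cons p T ih =>
    rw [FreeGroup.reduce.cons] at h
    rcases hT : FreeGroup.reduce T with _ | ⟨q, T'⟩
    · rw [hT] at h
      have h' : ([p] : List Ltr) = p :: T := h
      have hTn : [] = T := by injection h'
      subst hTn
      simp [IsRed, List.Chain']
    · rw [hT] at h
      by_cases hc : p.1 = q.1 ∧ p.2 = !q.2
      · exfalso
        have h' : T' = p :: T := by
          have h2 : (if p.1 = q.1 ∧ p.2 = !q.2 then T' else p :: q :: T') = p :: T := h
          rwa [if_pos hc] at h2
        have hlen := FreeGroup.Red.length_le (FreeGroup.reduce.red (L := T))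
        rw [hT, h'] at hlen
        simp at hlen
      · have h' : p :: q :: T' = p :: T := by
          have h2 : (if p.1 = q.1 ∧ p.2 = !q.2 then T' else p :: q :: T') = p :: T := h
          rwa [if_neg hc] at h2
        have hTT : T = q :: T' := by injection h' with _ h''; exact h''.symm
        rw [hTT]
        refine List.isChain_cons_cons.2 ⟨hc, ?_⟩
        rw [← hTT]
        exact ih (by rw [hT, hTT])

theorem isRed_toWord (g : F2) : IsRed (toWord g) :=
  isRed_of_reduce_eq_self (FreeGroup.reduce_toWord g)

theorem toWord_mk_of_isRed {L : List Ltr} (h : IsRed L) : (FreeGroup.mk L).toWord = L := by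
  rw [FreeGroup.toWord_mk, reduce_eq_self_of_isRed h]

/-- letter inversion -/
def ivl (p : Ltr) : Ltr := (p.1, !p.2)

theorem invRev_eq (L : List Ltr) : FreeGroup.invRev L = (L.map ivl).reverse := rfl

theorem isRed_invRev {L : List Ltr} (h : IsRed L) : IsRed (FreeGroup.invRev L) := by
  rw [invRev_eq, IsRed, List.Chain', List.isChain_reverse, List.isChain_map]
  refine h.imp ?_
  intro a b hab
  rintro ⟨h1, h2⟩
  simp only [ivl, Bool.not_not] at h2
  exact hab ⟨h1.symm, h2.symm⟩


theorem fin2_cases (i : Fin 2) : i = 0 ∨ i = 1 := by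
  rcases i with ⟨(_ | _ | k), hk⟩
  · left; rfl
  · right; rfl
  · omega

theorem mk_cons (p : Ltr) (L : List Ltr) :
    FreeGroup.mk (p :: L) = FreeGroup.mk [p] * FreeGroup.mk L := by
  rw [FreeGroup.mul_mk]; rfl

theorem mk_singleton_true (a : Fin 2) : FreeGroup.mk [(a, true)] = FreeGroup.of a := rfl

theorem mk_singleton_false (a : Fin 2) : FreeGroup.mk [(a, false)] = (FreeGroup.of a)⁻¹ := by
  rw [← mk_singleton_true, FreeGroup.inv_mk]; rfl

def phi (p : Ltr) : Ltr := if p.1 = 0 then (0, !p.2) else p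

theorem phi_fst (p : Ltr) : (phi p).1 = p.1 := by
  unfold phi; split <;> simp_all

theorem R_phi {a b : Ltr} (h : R a b) : R (phi a) (phi b) := by
  rintro ⟨e1, e2⟩
  rw [phi_fst, phi_fst] at e1
  apply h
  refine ⟨e1, ?_⟩
  unfold phi at e2
  by_cases ha : a.1 = 0
  · have hb : b.1 = 0 := by rw [← e1, ha]
    simp only [ha, hb, if_pos] at e2
    simp only [Bool.not_not] at e2
    simp [← e2]
  · have hb : ¬ b.1 = 0 := by rw [← e1]; exact ha
    simp only [ha, hb, if_neg, not_false_iff] at e2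
    exact e2

theorem isRed_map_phi {L : List Ltr} (h : IsRed L) : IsRed (L.map phi) :=
  (List.isChain_map phi).2 (h.imp fun _ _ hab => R_phi hab)

section T1
variable (t₁ : MulAut F2)
  (h1 : t₁ (FreeGroup.of 0) = (FreeGroup.of 0)⁻¹)
  (h2 : t₁ (FreeGroup.of 1) = FreeGroup.of 1)

include h1 h2

theorem t1_single (p : Ltr) : t₁ (FreeGroup.mk [p]) = FreeGroup.mk [phi p] := by
  obtain ⟨a, b⟩ := p
  rcases fin2_cases a with rfl | rfl <;> cases b <;>
    simp [phi, mk_singleton_true, mk_singleton_false, h1, h2]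

theorem t1_mk (L : List Ltr) : t₁ (FreeGroup.mk L) = FreeGroup.mk (L.map phi) := by
  induction L with
  | nil => simpa [FreeGroup.one_eq_mk] using _root_.map_one t₁
  | cons p T ih =>
    rw [mk_cons, _root_.map_mul, ih, t1_single t₁ h1 h2, FreeGroup.mul_mk, List.map_cons]
    rfl

theorem toWord_t1 (g : F2) : (t₁ g).toWord = g.toWord.map phi := by
  conv_lhs => rw [← FreeGroup.mk_toWord (x := g)]
  rw [t1_mk t₁ h1 h2]
  exact toWord_mk_of_isRed (isRed_map_phi (isRed_toWord g))


omit h1 h2 in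
theorem eq_map_self_forall : ∀ {L : List Ltr}, L = L.map phi → ∀ p ∈ L, phi p = p := by
  intro L
  induction L with
  | nil => intro _ p hp; cases hp
  | cons q T ih =>
    intro h p hp
    rw [List.map_cons] at h
    injection h with hq hT
    rcases List.mem_cons.1 hp with rfl | hp
    · exact hq.symm
    · exact ih hT p hp

omit h1 h2 in
theorem fst_eq_one_of_phi_fixed {p : Ltr} (h : phi p = p) : p.1 = 1 := by
  rcases fin2_cases p.1 with h0 | h1
  · exfalso
    unfold phi at h
    rw [if_pos h0] at h
    have : (!p.2) = p.2 := congrArg Prod.snd h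
    simp at this
  · exact h1

omit h1 h2 in
theorem replicate_of_all_one : ∀ {L : List Ltr}, IsRed L → (∀ p ∈ L, p.1 = 1) →
    ∃ n s, L = List.replicate n ((1 : Fin 2), s) := by
  intro L
  induction L with
  | nil => exact fun _ _ => ⟨0, true, rfl⟩
  | cons p T ih =>
    intro hred hall
    obtain ⟨n, s, hT⟩ := ih hred.tail (fun q hq => hall q (List.mem_cons_of_mem _ hq))
    have hp1 : p.1 = 1 := hall p List.mem_cons_self
    cases T with
    | nil => exact ⟨1, p.2, by rw [List.replicate_one]; congr 1; exact Prod.ext hp1 rfl⟩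
    | cons q T' =>
      have hn : n ≠ 0 := by rintro rfl; simp at hT
      have hq : q = ((1 : Fin 2), s) := by
        obtain ⟨n', rfl⟩ := Nat.exists_eq_succ_of_ne_zero hn
        rw [List.replicate_succ] at hT
        injection hT
      have hR : R p q := (List.isChain_cons_cons.1 hred).1
      have hps : p.2 = s := by
        unfold R at hR
        rw [hq] at hR
        push_neg at hR
        have := hR hp1
        simp at this
        simpa using this
      refine ⟨n + 1, s, ?_⟩
      rw [List.replicate_succ, hT]
      congr 1
      exact Prod.ext hp1 hps

omit h1 h2 in
theorem mk_replicate (n : ℕ) (s : Bool) :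
    FreeGroup.mk (List.replicate n ((1 : Fin 2), s)) =
      (cond s (FreeGroup.of 1) (FreeGroup.of 1)⁻¹) ^ n := by
  induction n with
  | zero => rfl
  | succ m ih =>
    rw [List.replicate_succ, ← List.singleton_append, ← FreeGroup.mul_mk, ih, pow_succ']
    congr 1
    cases s
    · exact mk_singleton_false 1
    · exact mk_singleton_true 1

include h1 h2

theorem key_eq (g : F2) (hg : t₁ g = g⁻¹) :
    g.toWord.map phi = FreeGroup.invRev g.toWord := by
  rw [← toWord_t1 t₁ h1 h2 g, hg, FreeGroup.toWord_inv]

theorem getLast?_of_inverted (g : F2) (hg : t₁ g = g⁻¹) {p : Ltr}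
    (hh : g.toWord.head? = some p) : g.toWord.getLast? = some (ivl (phi p)) := by
  have key := key_eq t₁ h1 h2 g hg
  rw [invRev_eq] at key
  have e1 : (g.toWord.map phi).head? = some (phi p) := by rw [List.head?_map, hh]; rfl
  rw [key, List.head?_reverse, List.getLast?_map] at e1
  rcases ho : g.toWord.getLast? with _ | q
  · rw [ho] at e1; simp at e1
  · rw [ho] at e1
    have e2 : ivl q = phi p := by simpa using e1
    rw [← e2]
    simp [ivl]

theorem inverted_decomp :
    ∀ (n : ℕ) (g : F2), g.toWord.length = n → t₁ g = g⁻¹ →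
    ∃ (k : ℤ) (g₀ : F2), g = (FreeGroup.of 1) ^ k * g₀ * ((FreeGroup.of 1) ^ k)⁻¹ ∧
      t₁ g₀ = g₀⁻¹ ∧
      (g₀.toWord = [] ∨ ∃ q : Ltr, g₀.toWord.head? = some q ∧ q.1 = 0) := by
  intro n
  induction n using Nat.strong_induction_on with
  | _ n ih =>
    intro g hlen hg
    rcases hL : g.toWord with _ | ⟨⟨a, b⟩, T⟩
    · exact ⟨0, g, by simp, hg, Or.inl hL⟩
    rcases fin2_cases a with rfl | rfl
    · exact ⟨0, g, by simp, hg, Or.inr ⟨(0, b), by rw [hL]; rfl, rfl⟩⟩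
    -- a = 1
    have hlast : g.toWord.getLast? = some ((1 : Fin 2), !b) := by
      have h' := getLast?_of_inverted t₁ h1 h2 g hg (p := ((1 : Fin 2), b)) (by rw [hL]; rfl)
      rw [h']
      simp [phi, ivl, Fin.ext_iff]
    cases T with
    | nil =>
      exfalso
      rw [hL] at hlast
      simp at hlast
    | cons q T' =>
      set M := (q :: T').dropLast with hMdef
      have hTlast : (q :: T').getLast? = some ((1 : Fin 2), !b) := by
        rw [hL, List.getLast?_cons_cons] at hlast
        exact hlast
      have hTdecomp : q :: T' = M ++ [((1 : Fin 2), !b)] :=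
        (List.dropLast_append_getLast? _ hTlast).symm
      have hLdecomp : g.toWord = ((1 : Fin 2), b) :: (M ++ [((1 : Fin 2), !b)]) := by
        rw [hL, hTdecomp]
      have hMred : IsRed M := by
        have := (isRed_toWord g).tail
        rw [hL, hTdecomp] at this
        exact (List.isChain_append.1 this).1
      set y1 : F2 := FreeGroup.of 1 with hy1
      set e : ℤ := cond b 1 (-1) with he
      have hmkb : FreeGroup.mk [((1 : Fin 2), b)] = y1 ^ e := by
        cases b <;> simp [he, hy1, mk_singleton_true, mk_singleton_false]
      have hmknb : FreeGroup.mk [((1 : Fin 2), !b)] = (y1 ^ e)⁻¹ := by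
        cases b <;> simp [he, hy1, mk_singleton_true, mk_singleton_false]
      set g' : F2 := FreeGroup.mk M with hg'
      have hgrep : g = y1 ^ e * g' * (y1 ^ e)⁻¹ := by
        conv_lhs => rw [← FreeGroup.mk_toWord (x := g), hLdecomp]
        rw [← List.singleton_append, ← FreeGroup.mul_mk, ← FreeGroup.mul_mk, hmkb, hmknb, hg',
          mul_assoc]
      have hty : t₁ (y1 ^ e) = y1 ^ e := by rw [map_zpow, h2]
      have hg'inv : t₁ g' = g'⁻¹ := by
        have hrep' : g' = (y1 ^ e)⁻¹ * g * y1 ^ e := by rw [hgrep]; group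
        rw [hrep', _root_.map_mul, _root_.map_mul, _root_.map_inv, hty, hg]
        group
      have hg'word : g'.toWord = M := toWord_mk_of_isRed hMred
      have hMlen : M.length + 2 = n := by
        have := congrArg List.length hLdecomp
        rw [hlen] at this
        simp at this
        omega
      obtain ⟨k', g₀, hrep, hinv, hcase⟩ :=
        ih M.length (by omega) g' (by rw [hg'word]) hg'inv
      refine ⟨e + k', g₀, ?_, hinv, hcase⟩
      rw [hgrep, hrep, zpow_add]
      group
end T1

def blk (A B : List Ltr) (p : Ltr) : List Ltr :=
  if p.1 = 0 then (if p.2 then A else FreeGroup.invRev A)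
  else (if p.2 then B else FreeGroup.invRev B)

def cfun (cA cB : Ltr) (p : Ltr) : Ltr :=
  if p.1 = 0 then (if p.2 then cA else ivl cA) else (if p.2 then cB else ivl cB)

def expand (A B : List Ltr) : List Ltr → List Ltr
  | [] => []
  | p :: L => blk A B p ++ expand A B L

section Blocks
variable {a b : F2} {cA cB : Ltr}
  (hA0 : cA.1 = 0) (hB1 : cB.1 = 1)
  (hAh : a.toWord.head? = some cA) (hAl : a.toWord.getLast? = some cA)
  (hBh : b.toWord.head? = some cB) (hBl : b.toWord.getLast? = some cB)

theorem head?_invRev {L : List Ltr} {c : Ltr} (h : L.getLast? = some c) :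
    (FreeGroup.invRev L).head? = some (ivl c) := by
  rw [invRev_eq, List.head?_reverse, List.getLast?_map, h]; rfl

theorem getLast?_invRev {L : List Ltr} {c : Ltr} (h : L.head? = some c) :
    (FreeGroup.invRev L).getLast? = some (ivl c) := by
  rw [invRev_eq, List.getLast?_reverse, List.head?_map, h]; rfl

include hAh hAl hBh hBl in
theorem blk_head? (p : Ltr) :
    (blk a.toWord b.toWord p).head? = some (cfun cA cB p) := by
  unfold blk cfun
  rcases fin2_cases p.1 with h | h <;> rw [h] <;> cases hp2 : p.2 <;> simp only [if_pos, if_neg,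
    Bool.false_eq_true, not_false_iff, if_true, if_false, reduceIte]
  · exact head?_invRev hAl
  · exact hAh
  · exact head?_invRev hBl
  · exact hBh

include hAh hAl hBh hBl in
theorem blk_getLast? (p : Ltr) :
    (blk a.toWord b.toWord p).getLast? = some (cfun cA cB p) := by
  unfold blk cfun
  rcases fin2_cases p.1 with h | h <;> rw [h] <;> cases hp2 : p.2 <;> simp only [if_pos, if_neg,
    Bool.false_eq_true, not_false_iff, if_true, if_false, reduceIte]
  · exact getLast?_invRev hAh
  · exact hAl
  · exact getLast?_invRev hBh
  · exact hBl

include hAh hBh in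
theorem blk_ne (p : Ltr) : blk a.toWord b.toWord p ≠ [] := by
  have ha : a.toWord ≠ [] := by rintro h; rw [h] at hAh; cases hAh
  have hb : b.toWord ≠ [] := by rintro h; rw [h] at hBh; cases hBh
  have hia : FreeGroup.invRev a.toWord ≠ [] := by
    rintro h
    have := congrArg List.length h
    rw [FreeGroup.invRev_length] at this
    exact ha (List.length_eq_zero_iff.1 this)
  have hib : FreeGroup.invRev b.toWord ≠ [] := by
    rintro h
    have := congrArg List.length h
    rw [FreeGroup.invRev_length] at this
    exact hb (List.length_eq_zero_iff.1 this)
  unfold blk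
  split <;> split <;> assumption

include hA0 hB1 in
theorem cfun_fst (p : Ltr) : (cfun cA cB p).1 = p.1 := by
  unfold cfun
  rcases fin2_cases p.1 with h | h <;> rw [h] <;> cases p.2 <;>
    simp only [reduceIte, ivl] <;> simp [hA0, hB1]

include hA0 hB1 in
theorem R_cfun {p q : Ltr} (h : R p q) : R (cfun cA cB p) (cfun cA cB q) := by
  by_cases hf : p.1 = q.1
  · have h2 : p.2 = q.2 := by
      by_contra h2
      exact h ⟨hf, by cases hp : p.2 <;> cases hq : q.2 <;> simp_all⟩
    have : p = q := Prod.ext hf h2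
    subst this
    rintro ⟨-, habs⟩
    simp at habs
  · rintro ⟨hc, -⟩
    rw [cfun_fst hA0 hB1, cfun_fst hA0 hB1] at hc
    exact hf hc

theorem blk_isRed (p : Ltr) : IsRed (blk a.toWord b.toWord p) := by
  unfold blk
  split <;> split
  · exact isRed_toWord a
  · exact isRed_invRev (isRed_toWord a)
  · exact isRed_toWord b
  · exact isRed_invRev (isRed_toWord b)

include hA0 hB1 hAh hAl hBh hBl in
theorem expand_isRed : ∀ {L : List Ltr}, IsRed L →
    IsRed (expand a.toWord b.toWord L) ∧
      (expand a.toWord b.toWord L).head? = L.head?.map (cfun cA cB) := by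
  intro L
  induction L with
  | nil => exact fun _ => ⟨List.isChain_nil, rfl⟩
  | cons p L ih =>
    intro h
    obtain ⟨ihred, ihhead⟩ := ih h.tail
    constructor
    · show IsRed (blk a.toWord b.toWord p ++ expand a.toWord b.toWord L)
      rw [IsRed, List.Chain', List.isChain_append]
      refine ⟨blk_isRed p, ihred, ?_⟩
      intro x hx y hy
      rw [blk_getLast? hAh hAl hBh hBl p] at hx
      rw [ihhead] at hy
      cases hx
      rcases hL : L with _ | ⟨q, L'⟩
      · rw [hL] at hy; cases hy
      · rw [hL] at hy
        simp only [List.head?_cons, Option.map_some] at hy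
        rcases hy with rfl | hy
        · have hpq : R p q := by
            rw [hL] at h
            exact (List.isChain_cons_cons.1 h).1
          exact R_cfun hA0 hB1 hpq
    · show (blk a.toWord b.toWord p ++ expand a.toWord b.toWord L).head? = _
      rw [List.head?_append]
      rw [blk_head? hAh hAl hBh hBl p]
      rfl

theorem expand_mk (a b : F2) :
    ∀ L : List Ltr, FreeGroup.mk (expand a.toWord b.toWord L) =
      FreeGroup.lift (fun i : Fin 2 => if i = 0 then a else b) (FreeGroup.mk L) := by
  intro L
  induction L with
  | nil => rw [← FreeGroup.one_eq_mk, _root_.map_one]; rfl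
  | cons p L ih =>
    show FreeGroup.mk (blk a.toWord b.toWord p ++ expand a.toWord b.toWord L) = _
    rw [← FreeGroup.mul_mk, ih, mk_cons, _root_.map_mul]
    congr 1
    obtain ⟨i, s⟩ := p
    have h10 : (1 : Fin 2) ≠ 0 := by decide
    rcases fin2_cases i with rfl | rfl <;> cases s
    · have hb : blk a.toWord b.toWord (0, false) = FreeGroup.invRev a.toWord := by
        simp [blk]
      rw [hb, mk_singleton_false, _root_.map_inv, FreeGroup.lift_apply_of, if_pos rfl,
        ← FreeGroup.inv_mk, FreeGroup.mk_toWord]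
    · have hb : blk a.toWord b.toWord (0, true) = a.toWord := by simp [blk]
      rw [hb, mk_singleton_true, FreeGroup.lift_apply_of, if_pos rfl, FreeGroup.mk_toWord]
    · have hb : blk a.toWord b.toWord (1, false) = FreeGroup.invRev b.toWord := by
        simp [blk, h10]
      rw [hb, mk_singleton_false, _root_.map_inv, FreeGroup.lift_apply_of, if_neg h10,
        ← FreeGroup.inv_mk, FreeGroup.mk_toWord]
    · have hb : blk a.toWord b.toWord (1, true) = b.toWord := by simp [blk, h10]
      rw [hb, mk_singleton_true, FreeGroup.lift_apply_of, if_neg h10, FreeGroup.mk_toWord]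

include hA0 hB1 hAh hAl hBh hBl in
theorem blocks_main (g : F2)
    (hsurj : ∃ c, FreeGroup.lift (fun i : Fin 2 => if i = 0 then a else b) c = g)
    (hlen : g.toWord.length = 1) :
    ∃ p : Ltr, g.toWord = blk a.toWord b.toWord p := by
  obtain ⟨c, hc⟩ := hsurj
  have hcL : FreeGroup.mk c.toWord = c := FreeGroup.mk_toWord
  have hge : g = FreeGroup.mk (expand a.toWord b.toWord c.toWord) := by
    rw [expand_mk, hcL, hc]
  have hgw : g.toWord = expand a.toWord b.toWord c.toWord := by
    rw [hge]
    exact toWord_mk_of_isRed (expand_isRed hA0 hB1 hAh hAl hBh hBl (isRed_toWord c)).1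
  rcases hL : c.toWord with _ | ⟨p, L'⟩
  · exfalso
    rw [hgw, hL] at hlen
    simp [expand] at hlen
  rcases hL' : L' with _ | ⟨q, L''⟩
  · refine ⟨p, ?_⟩
    rw [hgw, hL, hL']
    show blk a.toWord b.toWord p ++ expand a.toWord b.toWord [] = _
    simp [expand]
  · exfalso
    rw [hgw, hL, hL'] at hlen
    have e1 : expand a.toWord b.toWord (p :: q :: L'') =
        blk a.toWord b.toWord p ++ (blk a.toWord b.toWord q ++ expand a.toWord b.toWord L'') := rfl
    rw [e1] at hlen
    have l1 : 0 < (blk a.toWord b.toWord p).length :=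
      List.length_pos_iff.2 (blk_ne hAh hBh p)
    have l2 : 0 < (blk a.toWord b.toWord q).length :=
      List.length_pos_iff.2 (blk_ne hAh hBh q)
    rw [List.length_append, List.length_append] at hlen
    omega

end Blocks

theorem invRev_replicate (n : ℕ) (c : Ltr) :
    FreeGroup.invRev (List.replicate n c) = List.replicate n (ivl c) := by
  rw [invRev_eq, List.map_replicate, List.reverse_replicate]

theorem main
    (t₁ t₂ : MulAut (FreeGroup (Fin 2)))
    (h1 : t₁ (FreeGroup.of 0) = (FreeGroup.of 0)⁻¹)
    (h2 : t₁ (FreeGroup.of 1) = FreeGroup.of 1)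
    (hcomm : t₁ * t₂ = t₂ * t₁) :
    ∃ (k ε δ : ℤ), (ε = 1 ∨ ε = -1) ∧ (δ = 1 ∨ δ = -1) ∧
      t₂ (FreeGroup.of 1) = (FreeGroup.of 1) ^ ε ∧
      t₂ (FreeGroup.of 0) =
        (FreeGroup.of 1) ^ k * (FreeGroup.of 0) ^ δ * ((FreeGroup.of 1) ^ k)⁻¹ := by
  have hcm : ∀ g : F2, t₁ (t₂ g) = t₂ (t₁ g) := by
    intro g
    have := congrArg (fun e : MulAut F2 => e g) hcomm
    simpa [MulAut.mul_apply] using this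
  set v : F2 := t₂ (FreeGroup.of 1) with hv
  set w : F2 := t₂ (FreeGroup.of 0) with hw
  have hvfix : t₁ v = v := by rw [hv, hcm, h2]
  have hwinv : t₁ w = w⁻¹ := by
    rw [hw, hcm, h1, _root_.map_inv]
  have hvne : v ≠ 1 := by
    intro h
    have := t₂.injective (h.trans (_root_.map_one t₂).symm)
    exact FreeGroup.of_ne_one 1 this
  have hwne : w ≠ 1 := by
    intro h
    have := t₂.injective (h.trans (_root_.map_one t₂).symm)
    exact FreeGroup.of_ne_one 0 this
  -- v is a power of y
  have hvword : v.toWord = v.toWord.map phi := by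
    conv_lhs => rw [← hvfix, toWord_t1 t₁ h1 h2]
  obtain ⟨n, s, hvrep⟩ := replicate_of_all_one (isRed_toWord v)
    (fun p hp => fst_eq_one_of_phi_fixed (eq_map_self_forall hvword p hp))
  have hnne : n ≠ 0 := by
    rintro rfl
    exact hvne (FreeGroup.toWord_eq_nil_iff.1 hvrep)
  have hvmk : v = (cond s (FreeGroup.of 1) (FreeGroup.of 1)⁻¹) ^ n := by
    rw [← mk_replicate, ← hvrep, FreeGroup.mk_toWord]
  have hvzpow : v = (FreeGroup.of 1) ^ (cond s (n : ℤ) (-(n : ℤ))) := by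
    cases s
    · rw [hvmk]
      simp [zpow_natCast]
    · rw [hvmk]
      simp [zpow_natCast]
  -- decompose w
  obtain ⟨k, g₀, hrep, hinv, hcase⟩ :=
    inverted_decomp t₁ h1 h2 w.toWord.length w rfl hwinv
  have hg0ne : g₀ ≠ 1 := by
    rintro rfl
    rw [mul_one] at hrep
    exact hwne (by rw [hrep]; group)
  rcases hcase with hnil | ⟨q, hqh, hq0⟩
  · exact absurd (FreeGroup.toWord_eq_nil_iff.1 hnil) hg0ne
  have hql : g₀.toWord.getLast? = some q := by
    have := getLast?_of_inverted t₁ h1 h2 g₀ hinv hqh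
    rw [this]
    congr 1
    unfold phi ivl
    rw [if_pos hq0]
    exact Prod.ext hq0.symm (Bool.not_not _)
  -- B data
  set cB : Ltr := ((1 : Fin 2), s) with hcB
  have hBh : v.toWord.head? = some cB := by
    obtain ⟨n', rfl⟩ := Nat.exists_eq_succ_of_ne_zero hnne
    rw [hvrep, List.replicate_succ, List.head?_cons]
  have hBl : v.toWord.getLast? = some cB := by
    obtain ⟨n', rfl⟩ := Nat.exists_eq_succ_of_ne_zero hnne
    rw [hvrep, List.replicate_succ', List.getLast?_concat]
  -- surjectivity
  set f : Fin 2 → F2 := fun i => if i = 0 then g₀ else v with hf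
  have hcommute : (FreeGroup.of 1 : F2) ^ k * v = v * (FreeGroup.of 1) ^ k := by
    rw [hvzpow, ← zpow_add, ← zpow_add, add_comm]
  have hsurj : ∀ g : F2, ∃ c, FreeGroup.lift f c = g := by
    have hrtop : (FreeGroup.lift f).range = ⊤ := by
      rw [FreeGroup.range_lift_eq_closure]
      rw [eq_top_iff]
      set ρ : F2 ≃* F2 := t₂.trans (MulAut.conj ((FreeGroup.of 1 : F2) ^ k)⁻¹) with hρ
      have hρ0 : ρ (FreeGroup.of 0) = g₀ := by
        have e : ρ (FreeGroup.of 0) =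
            ((FreeGroup.of 1 : F2) ^ k)⁻¹ * w * ((FreeGroup.of 1 : F2) ^ k)⁻¹⁻¹ := rfl
        rw [e, hrep]
        group
      have hρ1 : ρ (FreeGroup.of 1) = v := by
        have e : ρ (FreeGroup.of 1) =
            ((FreeGroup.of 1 : F2) ^ k)⁻¹ * v * ((FreeGroup.of 1 : F2) ^ k)⁻¹⁻¹ := rfl
        rw [e, inv_inv, mul_assoc, ← hcommute]
        group
      calc (⊤ : Subgroup F2) = Subgroup.map ρ.toMonoidHom ⊤ := by
            rw [Subgroup.map_top_of_surjective _ ρ.surjective]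
        _ = Subgroup.map ρ.toMonoidHom (Subgroup.closure (Set.range FreeGroup.of)) := by
            rw [FreeGroup.closure_range_of]
        _ = Subgroup.closure (ρ.toMonoidHom '' Set.range FreeGroup.of) :=
            MonoidHom.map_closure _ _
        _ ≤ Subgroup.closure (Set.range f) := by
            apply Subgroup.closure_mono
            rintro x ⟨y, ⟨i, rfl⟩, rfl⟩
            rcases fin2_cases i with rfl | rfl
            · exact ⟨0, by simp [hf, hρ0]⟩
            · exact ⟨1, by simp only [hf, reduceIte, MulEquiv.coe_toMonoidHom]; exact hρ1.symm⟩
    intro g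
    have : g ∈ (FreeGroup.lift f).range := by rw [hrtop]; trivial
    exact this
  -- apply blocks lemma
  have happ0 := blocks_main hq0 (show cB.1 = 1 from rfl) hqh hql hBh hBl
    (FreeGroup.of 0) (hsurj _) (by rw [FreeGroup.toWord_of]; rfl)
  have happ1 := blocks_main hq0 (show cB.1 = 1 from rfl) hqh hql hBh hBl
    (FreeGroup.of 1) (hsurj _) (by rw [FreeGroup.toWord_of]; rfl)
  rw [FreeGroup.toWord_of] at happ0 happ1
  have h10 : (1 : Fin 2) ≠ 0 := by decide
  have hblk00 : ∀ x y : List Ltr, blk x y ((0 : Fin 2), false) = FreeGroup.invRev x := by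
    intro x y; simp [blk]
  have hblk01 : ∀ x y : List Ltr, blk x y ((0 : Fin 2), true) = x := by
    intro x y; simp [blk]
  have hblk10 : ∀ x y : List Ltr, blk x y ((1 : Fin 2), false) = FreeGroup.invRev y := by
    intro x y; simp [blk, h10]
  have hblk11 : ∀ x y : List Ltr, blk x y ((1 : Fin 2), true) = y := by
    intro x y; simp [blk, h10]
  -- analyze happ1 : [(1,true)] = blk ... p  → ε
  obtain ⟨p1, hp1⟩ := happ1
  obtain ⟨i1, s1⟩ := p1
  have hεex : ∃ ε : ℤ, (ε = 1 ∨ ε = -1) ∧ v = (FreeGroup.of 1) ^ ε := by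
    rcases fin2_cases i1 with rfl | rfl <;> cases s1
    · rw [hblk00] at hp1
      exfalso
      have hg0w : g₀.toWord = [((1 : Fin 2), false)] := by
        rw [← FreeGroup.invRev_invRev (L₁ := g₀.toWord), ← hp1]
        rfl
      rw [hg0w] at hqh
      have hquq : q = ((1 : Fin 2), false) := by
        rw [List.head?_cons] at hqh
        exact (Option.some.inj hqh).symm
      rw [hquq] at hq0
      exact absurd hq0 (by decide)
    · rw [hblk01] at hp1
      exfalso
      rw [← hp1, List.head?_cons] at hqh
      have hquq : q = ((1 : Fin 2), true) := (Option.some.inj hqh).symm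
      rw [hquq] at hq0
      exact absurd hq0 (by decide)
    · rw [hblk10, hvrep, invRev_replicate] at hp1
      have hn1 : n = 1 := by
        have := congrArg List.length hp1
        simpa using this.symm
      subst hn1
      rw [List.replicate_one] at hp1
      have hs : s = false := by
        have he2 : ivl ((1 : Fin 2), s) = ((1 : Fin 2), true) :=
          List.head_eq_of_cons_eq hp1.symm
        have := congrArg Prod.snd he2
        simp only [ivl] at this
        simpa using this
      refine ⟨-1, Or.inr rfl, ?_⟩
      rw [hvzpow, hs]
      norm_num
    · rw [hblk11, hvrep] at hp1
      have hn1 : n = 1 := by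
        have := congrArg List.length hp1
        simpa using this.symm
      subst hn1
      rw [List.replicate_one] at hp1
      have hs : s = true := by
        have he2 : ((1 : Fin 2), s) = ((1 : Fin 2), true) :=
          List.head_eq_of_cons_eq hp1.symm
        have := congrArg Prod.snd he2
        simpa using this
      refine ⟨1, Or.inl rfl, ?_⟩
      rw [hvzpow, hs]
      norm_num
  -- analyze happ0 → δ
  obtain ⟨p0, hp0⟩ := happ0
  obtain ⟨i0, s0⟩ := p0
  have hδex : ∃ δ : ℤ, (δ = 1 ∨ δ = -1) ∧ g₀ = (FreeGroup.of 0) ^ δ := by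
    rcases fin2_cases i0 with rfl | rfl <;> cases s0
    · rw [hblk00] at hp0
      have hg0w : g₀.toWord = [((0 : Fin 2), false)] := by
        rw [← FreeGroup.invRev_invRev (L₁ := g₀.toWord), ← hp0]
        rfl
      refine ⟨-1, Or.inr rfl, ?_⟩
      rw [← FreeGroup.mk_toWord (x := g₀), hg0w, mk_singleton_false]
      norm_num
    · rw [hblk01] at hp0
      refine ⟨1, Or.inl rfl, ?_⟩
      rw [← FreeGroup.mk_toWord (x := g₀), ← hp0, mk_singleton_true]
      norm_num
    · exfalso
      rw [hblk10, hvrep, invRev_replicate] at hp0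
      obtain ⟨n', rfl⟩ := Nat.exists_eq_succ_of_ne_zero hnne
      rw [List.replicate_succ] at hp0
      injection hp0 with he _
      rw [hcB] at he
      have h01 : (0 : Fin 2) = 1 := congrArg Prod.fst he
      exact absurd h01 (by decide)
    · exfalso
      rw [hblk11, hvrep] at hp0
      obtain ⟨n', rfl⟩ := Nat.exists_eq_succ_of_ne_zero hnne
      rw [List.replicate_succ] at hp0
      injection hp0 with he _
      rw [hcB] at he
      have h01 : (0 : Fin 2) = 1 := congrArg Prod.fst he
      exact absurd h01 (by decide)
  obtain ⟨ε, hε, hvε⟩ := hεex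
  obtain ⟨δ, hδ, hgδ⟩ := hδex
  exact ⟨k, ε, δ, hε, hδ, hvε, by rw [hrep, hgδ]⟩


end CAF

/-- If `t₂ ∈ Aut(F₂)` commutes with the automorphism `t₁` which inverts `x₁`
and fixes `x₂`, then `t₂(x₂) = x₂^ε` and `t₂(x₁) = x₂ᵏ x₁^δ x₂⁻ᵏ` with `ε, δ ∈ {1, -1}`. -/
theorem commuting_automorphism_form
    (t₁ t₂ : MulAut (FreeGroup (Fin 2)))
    (h1 : t₁ (FreeGroup.of 0) = (FreeGroup.of 0)⁻¹)
    (h2 : t₁ (FreeGroup.of 1) = FreeGroup.of 1)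
    (hcomm : t₁ * t₂ = t₂ * t₁) :
    ∃ (k ε δ : ℤ), (ε = 1 ∨ ε = -1) ∧ (δ = 1 ∨ δ = -1) ∧
      t₂ (FreeGroup.of 1) = (FreeGroup.of 1) ^ ε ∧
      t₂ (FreeGroup.of 0) =
        (FreeGroup.of 1) ^ k * (FreeGroup.of 0) ^ δ * ((FreeGroup.of 1) ^ k)⁻¹ :=
  CAF.main t₁ t₂ h1 h2 hcomm
end

section
/- Let F₂ = ⟨x₁, x₂⟩ be free of rank 2 and let the semidirect product G = F₂ ⋊ (ℤ × ℤ/2ℤ) be defined by: the generator t₁ of ℤ/2ℤ acts by t₁(x₁) = x₁⁻¹, t₁(x₂) = x₂, and the generator t₂ of ℤ acts by t₂(x₁) = x₂ᵏ x₁ x₂⁻ᵏ, t₂(x₂) = x₂. Then G is isomorphic to the amalgamated free product L₁ *_L L₂, where L₁ ≅ ℤ² × ℤ/2ℤ, L₂ ≅ ℤ × D∞, and L ≅ ℤ × ℤ/2ℤ embedded as ⟨t₁, ξ⟩ in both factors (with ξ = x₂⁻ᵏ t₂). -/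
namespace Stmt9

/-- A two-member family of groups indexed by `Bool`. -/
def Fam (L₁ L₂ : Type u) : Bool → Type u := fun b => cond b L₁ L₂

instance (L₁ L₂ : Type u) [Group L₁] [Group L₂] : ∀ b, Group (Fam L₁ L₂ b)
  | true => ‹Group L₁›
  | false => ‹Group L₂›

/-- `L₁ = ℤ² × ℤ/2ℤ`. -/
abbrev L₁ := (Multiplicative ℤ × Multiplicative ℤ) × Multiplicative (ZMod 2)
/-- `L₂ = ℤ × D∞`. -/
abbrev L₂ := Multiplicative ℤ × DihedralGroup 0
/-- `L = ℤ × ℤ/2ℤ`. -/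
abbrev L := Multiplicative ℤ × Multiplicative (ZMod 2)

/-! ### Auxiliary general lemmas -/

section Helpers

open Multiplicative

variable {G : Type*} [Group G]

/-- Homomorphism from `ℤ/2` (multiplicative) determined by an element of order dividing 2. -/
def C2hom (g : G) (hg : g * g = 1) : Multiplicative (ZMod 2) →* G :=
  MonoidHom.mk' (fun s => if s = 1 then 1 else g) (by
    intro a b
    have hne : (Multiplicative.ofAdd (1 : ZMod 2)) ≠ 1 := by decide
    have h11 : (Multiplicative.ofAdd (1 : ZMod 2)) * Multiplicative.ofAdd 1 = 1 := by decide
    rcases (by decide : ∀ z : Multiplicative (ZMod 2), z = 1 ∨ z = Multiplicative.ofAdd 1) a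
        with rfl | rfl <;>
      rcases (by decide : ∀ z : Multiplicative (ZMod 2), z = 1 ∨ z = Multiplicative.ofAdd 1) b
        with rfl | rfl <;>
      simp [hne, h11, hg])

@[simp] lemma C2hom_ofAdd_one (g : G) (hg : g * g = 1) :
    C2hom g hg (Multiplicative.ofAdd (1 : ZMod 2)) = g := by
  show (if (Multiplicative.ofAdd (1 : ZMod 2)) = 1 then 1 else g) = g
  rw [if_neg (by decide)]

lemma C2hom_ext {f g : Multiplicative (ZMod 2) →* G}
    (h : f (Multiplicative.ofAdd 1) = g (Multiplicative.ofAdd 1)) : f = g := by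
  refine MonoidHom.ext fun s => ?_
  rcases (by decide : ∀ z : Multiplicative (ZMod 2), z = 1 ∨ z = Multiplicative.ofAdd 1) s
    with rfl | rfl
  · simp
  · exact h

def toZ : ZMod 0 → ℤ := fun i => i
def ofZ : ℤ → ZMod 0 := fun i => i

lemma toZ_add (i j : ZMod 0) : toZ (i + j) = toZ i + toZ j := rfl
lemma toZ_sub (i j : ZMod 0) : toZ (i - j) = toZ i - toZ j := rfl
lemma ofZ_toZ (i : ZMod 0) : ofZ (toZ i) = i := rfl

/-- Homomorphism from the infinite dihedral group determined by a "rotation" image `x`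
and a "reflection" image `t`. -/
def dihedralHom (x t : G) (ht : t * t = 1) (hc : t * x * t = x⁻¹) : DihedralGroup 0 →* G :=
  MonoidHom.mk' (fun d => match d with
    | .r i => x ^ toZ i
    | .sr i => t * x ^ toZ i) (by
    have hti : t⁻¹ = t := inv_eq_of_mul_eq_one_left ht
    have key : ∀ i : ℤ, t * x ^ i * t = x ^ (-i) := by
      intro i
      have h1 : t * x ^ i * t = (t * x * t⁻¹) ^ i := by rw [conj_zpow, hti]
      rw [h1, hti, hc, inv_zpow, ← zpow_neg]
    have h3 : ∀ i : ℤ, x ^ i * t = t * x ^ (-i) := by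
      intro i
      rw [← key i, ← mul_assoc, ← mul_assoc, ht, one_mul]
    rintro (i | i) (j | j)
    · rw [DihedralGroup.r_mul_r]
      show x ^ toZ (i + j) = x ^ toZ i * x ^ toZ j
      rw [toZ_add, zpow_add]
    · rw [DihedralGroup.r_mul_sr]
      show t * x ^ toZ (j - i) = x ^ toZ i * (t * x ^ toZ j)
      rw [toZ_sub, ← mul_assoc, h3, mul_assoc, ← zpow_add, sub_eq_neg_add]
    · rw [DihedralGroup.sr_mul_r]
      show t * x ^ toZ (i + j) = t * x ^ toZ i * x ^ toZ j
      rw [toZ_add, zpow_add, mul_assoc]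
    · rw [DihedralGroup.sr_mul_sr]
      show x ^ toZ (j - i) = t * x ^ toZ i * (t * x ^ toZ j)
      rw [toZ_sub, ← mul_assoc (t * x ^ toZ i) t, mul_assoc t (x ^ toZ i) t, h3,
        ← mul_assoc t t, ht, one_mul, ← zpow_add, sub_eq_neg_add])

@[simp] lemma dihedralHom_r_one (x t : G) (ht : t * t = 1) (hc : t * x * t = x⁻¹) :
    dihedralHom x t ht hc (.r 1) = x := by
  show x ^ (1 : ℤ) = x
  exact zpow_one x

@[simp] lemma dihedralHom_sr_zero (x t : G) (ht : t * t = 1) (hc : t * x * t = x⁻¹) :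
    dihedralHom x t ht hc (.sr 0) = t := by
  show t * x ^ (0 : ℤ) = t
  simp

lemma dihedralHom_r (x t : G) (ht : t * t = 1) (hc : t * x * t = x⁻¹) (i : ZMod 0) :
    dihedralHom x t ht hc (.r i) = x ^ toZ i := rfl

lemma dihedralHom_sr (x t : G) (ht : t * t = 1) (hc : t * x * t = x⁻¹) (i : ZMod 0) :
    dihedralHom x t ht hc (.sr i) = t * x ^ toZ i := rfl

lemma r_one_zpow (n : ℤ) : (DihedralGroup.r 1 : DihedralGroup 0) ^ n = DihedralGroup.r (ofZ n) := by
  induction n using Int.induction_on with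
  | zero => rw [zpow_zero, DihedralGroup.one_def]; rfl
  | succ n ih =>
      rw [zpow_add_one, ih, DihedralGroup.r_mul_r]
      rfl
  | pred n ih =>
      have hinv : (DihedralGroup.r 1 : DihedralGroup 0)⁻¹ = DihedralGroup.r (-1) := by
        symm
        refine eq_inv_of_mul_eq_one_left ?_
        rw [DihedralGroup.r_mul_r, DihedralGroup.one_def]
        norm_num
      rw [zpow_sub_one, ih, hinv, DihedralGroup.r_mul_r]
      rfl

lemma sr_zero_inv : (DihedralGroup.sr 0 : DihedralGroup 0)⁻¹ = DihedralGroup.sr 0 :=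
  inv_eq_of_mul_eq_one_left (DihedralGroup.sr_mul_self 0)

lemma r_one_inv : (DihedralGroup.r 1 : DihedralGroup 0)⁻¹ = DihedralGroup.r (-1) := by
  symm
  refine eq_inv_of_mul_eq_one_left ?_
  rw [DihedralGroup.r_mul_r, DihedralGroup.one_def]
  norm_num

lemma dihedral_ext {f g : DihedralGroup 0 →* G} (hr : f (.r 1) = g (.r 1))
    (hs : f (.sr 0) = g (.sr 0)) : f = g := by
  have hR : ∀ i, f (.r i) = g (.r i) := by
    intro i
    have h : (DihedralGroup.r i : DihedralGroup 0) = (DihedralGroup.r 1) ^ toZ i :=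
      (r_one_zpow (toZ i)).symm
    rw [h, map_zpow, map_zpow, hr]
  ext d
  rcases d with i | i
  · exact hR i
  · have h : (DihedralGroup.sr i : DihedralGroup 0) = DihedralGroup.sr 0 * DihedralGroup.r i := by
      rw [DihedralGroup.sr_mul_r, zero_add]
    rw [h, map_mul, map_mul, hs, hR]

lemma prodExtComp {M N H : Type*} [Monoid M] [Monoid N] [Monoid H] {f g : M × N →* H}
    (h1 : f.comp (MonoidHom.inl M N) = g.comp (MonoidHom.inl M N))
    (h2 : f.comp (MonoidHom.inr M N) = g.comp (MonoidHom.inr M N)) : f = g := by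
  ext ⟨m, n⟩
  have hm := DFunLike.congr_fun h1 m
  have hn := DFunLike.congr_fun h2 n
  simp only [MonoidHom.comp_apply, MonoidHom.inl_apply, MonoidHom.inr_apply] at hm hn
  have h : (m, n) = (m, (1 : N)) * ((1 : M), n) := by simp
  rw [h, map_mul, map_mul, hm, hn]

lemma zpow_ofAdd_one (a : Multiplicative ℤ) :
    (Multiplicative.ofAdd (1 : ℤ)) ^ (Multiplicative.toAdd a) = a := by
  rw [← ofAdd_zsmul, smul_eq_mul, mul_one, ofAdd_toAdd]

end Helpers

/-! ### The embeddings of `L` into `L₁` and `L₂` -/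

/-- The map `ℤ/2 → D∞` sending the generator to `sr 0`. -/
def C2D : Multiplicative (ZMod 2) →* DihedralGroup 0 :=
  C2hom (.sr 0) (DihedralGroup.sr_mul_self 0)

@[simp] lemma C2D_one : C2D 1 = 1 := map_one C2D

@[simp] lemma C2D_ofAdd_one : C2D (Multiplicative.ofAdd 1) = .sr 0 :=
  C2hom_ofAdd_one _ _

lemma C2D_inj : Function.Injective C2D := by
  intro s t h
  rcases (by decide : ∀ z : Multiplicative (ZMod 2), z = 1 ∨ z = Multiplicative.ofAdd 1) s
      with rfl | rfl <;>
    rcases (by decide : ∀ z : Multiplicative (ZMod 2), z = 1 ∨ z = Multiplicative.ofAdd 1) t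
      with rfl | rfl <;>
    first
      | rfl
      | (simp only [map_one, C2D_ofAdd_one, DihedralGroup.one_def] at h; cases h)

/-- The embeddings of the amalgamated subgroup. -/
def jmap : ∀ b, L →* Fam L₁ L₂ b
  | true => (MonoidHom.inl (Multiplicative ℤ) (Multiplicative ℤ)).prodMap (MonoidHom.id _)
  | false => (MonoidHom.id (Multiplicative ℤ)).prodMap C2D

lemma jmap_true (l : L) : jmap true l = ((((l.1, 1), l.2) : L₁) : Fam L₁ L₂ true) := rfl

lemma jmap_false (l : L) : jmap false l = (((l.1, C2D l.2) : L₂) : Fam L₁ L₂ false) := rfl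

lemma jmap_inj : ∀ b, Function.Injective (jmap b) := by
  intro b
  cases b
  · intro p q h
    have h' : ((p.1, C2D p.2) : L₂) = ((q.1, C2D q.2) : L₂) := h
    have h1 : p.1 = q.1 := congrArg (Prod.fst : L₂ → Multiplicative ℤ) h'
    have h2 : C2D p.2 = C2D q.2 := congrArg (Prod.snd : L₂ → DihedralGroup 0) h'
    exact Prod.ext h1 (C2D_inj h2)
  · intro p q h
    have h' : (((p.1, 1), p.2) : L₁) = (((q.1, 1), q.2) : L₁) := h
    have h1 : p.1 = q.1 := congrArg (fun z : L₁ => z.1.1) h'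
    have h2 : p.2 = q.2 := congrArg (fun z : L₁ => z.2) h'
    exact Prod.ext h1 h2

/-! ### The pushout side -/

section PushoutSide

open Monoid Multiplicative

instance : CommGroup (Fam L₁ L₂ true) :=
  { (inferInstance : Group (Fam L₁ L₂ true)) with
    mul_comm := fun a b => mul_comm (G := L₁) a b }

/-- The pushout. -/
abbrev P := Monoid.PushoutI jmap

/-- Image of `x₁`. -/
def PX₁ : P := Monoid.PushoutI.of (φ := jmap) false (((1, DihedralGroup.r 1) : L₂) : Fam L₁ L₂ false)
/-- Image of `x₂`. -/
def PX₂ : P := Monoid.PushoutI.of (φ := jmap) true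
  ((((1, Multiplicative.ofAdd 1), 1) : L₁) : Fam L₁ L₂ true)
/-- Image of `ξ = x₂⁻ᵏ t₂`. -/
def PXi : P := Monoid.PushoutI.of (φ := jmap) true
  ((((Multiplicative.ofAdd 1, 1), 1) : L₁) : Fam L₁ L₂ true)
/-- Image of `t₁`. -/
def PT : P := Monoid.PushoutI.of (φ := jmap) true
  ((((1, 1), Multiplicative.ofAdd 1) : L₁) : Fam L₁ L₂ true)

lemma of_true_mul (x y : L₁) :
    Monoid.PushoutI.of (φ := jmap) true (x : Fam L₁ L₂ true) *
      Monoid.PushoutI.of (φ := jmap) true (y : Fam L₁ L₂ true) =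
      Monoid.PushoutI.of (φ := jmap) true ((x * y : L₁) : Fam L₁ L₂ true) :=
  (map_mul _ _ _).symm

lemma of_false_mul (x y : L₂) :
    Monoid.PushoutI.of (φ := jmap) false (x : Fam L₁ L₂ false) *
      Monoid.PushoutI.of (φ := jmap) false (y : Fam L₁ L₂ false) =
      Monoid.PushoutI.of (φ := jmap) false ((x * y : L₂) : Fam L₁ L₂ false) :=
  (map_mul _ _ _).symm

lemma of_true_zpow (x : L₁) (n : ℤ) :
    Monoid.PushoutI.of (φ := jmap) true (x : Fam L₁ L₂ true) ^ n =
      Monoid.PushoutI.of (φ := jmap) true ((x ^ n : L₁) : Fam L₁ L₂ true) :=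
  (map_zpow _ _ _).symm

lemma of_false_zpow (x : L₂) (n : ℤ) :
    Monoid.PushoutI.of (φ := jmap) false (x : Fam L₁ L₂ false) ^ n =
      Monoid.PushoutI.of (φ := jmap) false ((x ^ n : L₂) : Fam L₁ L₂ false) :=
  (map_zpow _ _ _).symm

lemma of_true_inv (x : L₁) :
    (Monoid.PushoutI.of (φ := jmap) true (x : Fam L₁ L₂ true))⁻¹ =
      Monoid.PushoutI.of (φ := jmap) true ((x⁻¹ : L₁) : Fam L₁ L₂ true) :=
  (map_inv _ _).symm

lemma of_false_inv (x : L₂) :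
    (Monoid.PushoutI.of (φ := jmap) false (x : Fam L₁ L₂ false))⁻¹ =
      Monoid.PushoutI.of (φ := jmap) false ((x⁻¹ : L₂) : Fam L₁ L₂ false) :=
  (map_inv _ _).symm

lemma of_true_comm (x y : L₁) :
    Commute (Monoid.PushoutI.of (φ := jmap) true (x : Fam L₁ L₂ true))
      (Monoid.PushoutI.of (φ := jmap) true (y : Fam L₁ L₂ true)) :=
  (Commute.all (x : Fam L₁ L₂ true) (y : Fam L₁ L₂ true)).map _

lemma of_false_comm (x y : L₂) (h : x * y = y * x) :
    Commute (Monoid.PushoutI.of (φ := jmap) false (x : Fam L₁ L₂ false))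
      (Monoid.PushoutI.of (φ := jmap) false (y : Fam L₁ L₂ false)) := by
  unfold Commute SemiconjBy
  rw [of_false_mul, of_false_mul, h]

lemma PXi_eq_base : PXi = Monoid.PushoutI.base jmap (Multiplicative.ofAdd 1, 1) := by
  rw [← Monoid.PushoutI.of_apply_eq_base jmap true (Multiplicative.ofAdd 1, 1)]
  rfl

lemma PXi_false :
    PXi = Monoid.PushoutI.of (φ := jmap) false
      (((Multiplicative.ofAdd 1, 1) : L₂) : Fam L₁ L₂ false) := by
  rw [PXi_eq_base, ← Monoid.PushoutI.of_apply_eq_base jmap false (Multiplicative.ofAdd 1, 1)]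
  have h : jmap false (Multiplicative.ofAdd 1, 1) =
      (((Multiplicative.ofAdd 1, 1) : L₂) : Fam L₁ L₂ false) := by
    rw [jmap_false]
    show ((Multiplicative.ofAdd 1, C2D 1) : L₂) = (Multiplicative.ofAdd 1, 1)
    rw [C2D_one]
  rw [h]

lemma PT_eq_base : PT = Monoid.PushoutI.base jmap (1, Multiplicative.ofAdd 1) := by
  rw [← Monoid.PushoutI.of_apply_eq_base jmap true (1, Multiplicative.ofAdd 1)]
  rfl

lemma PT_false :
    PT = Monoid.PushoutI.of (φ := jmap) false
      (((1, DihedralGroup.sr 0) : L₂) : Fam L₁ L₂ false) := by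
  rw [PT_eq_base, ← Monoid.PushoutI.of_apply_eq_base jmap false (1, Multiplicative.ofAdd 1)]
  have h : jmap false (1, Multiplicative.ofAdd 1) =
      (((1, DihedralGroup.sr 0) : L₂) : Fam L₁ L₂ false) := by
    rw [jmap_false]
    show ((1, C2D (Multiplicative.ofAdd 1)) : L₂) = (1, DihedralGroup.sr 0)
    rw [C2D_ofAdd_one]
  rw [h]

lemma PT_sq : PT * PT = 1 := by
  show _ * _ = (1 : P)
  rw [PT, of_true_mul]
  have h : ((((1, 1), Multiplicative.ofAdd 1) : L₁) * (((1, 1), Multiplicative.ofAdd 1) : L₁)) =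
      (1 : L₁) := by
    have h2 : (Multiplicative.ofAdd (1 : ZMod 2)) * Multiplicative.ofAdd 1 = 1 := by decide
    simp [Prod.mk_mul_mk, h2]
  rw [h]
  exact map_one _

/-- The homomorphism from the free group. -/
def f₁ : FreeGroup (Fin 2) →* P :=
  FreeGroup.lift (fun i => if i = 0 then PX₁ else PX₂)

@[simp] lemma f₁_of_zero : f₁ (FreeGroup.of 0) = PX₁ := by
  simp [f₁]

@[simp] lemma f₁_of_one : f₁ (FreeGroup.of 1) = PX₂ := by
  simp [f₁]

variable (k : ℤ)

/-- Image of `t₂ = x₂^k ξ`. -/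
def Pu : P := PX₂ ^ k * PXi

lemma comm_PX₂_PT : Commute PX₂ PT := of_true_comm _ _
lemma comm_PXi_PT : Commute PXi PT := of_true_comm _ _
lemma comm_PX₂_PXi : Commute PX₂ PXi := of_true_comm _ _

lemma comm_Pu_PT : Commute (Pu k) PT :=
  (comm_PX₂_PT.zpow_left k).mul_left comm_PXi_PT

lemma comm_Pu_PX₂ : Commute (Pu k) PX₂ :=
  (((Commute.refl PX₂).zpow_left k).mul_left comm_PX₂_PXi.symm)

lemma comm_PXi_PX₁ : Commute PXi PX₁ := by
  rw [PXi_false]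
  exact of_false_comm _ _ (by
    show ((Multiplicative.ofAdd 1, 1) : L₂) * (1, DihedralGroup.r 1) = _
    simp [Prod.mk_mul_mk])

/-- The homomorphism from `ℤ × ℤ/2` into the pushout. -/
def f₂ : (Multiplicative ℤ × Multiplicative (ZMod 2)) →* P :=
  (zpowersHom P (Pu k)).noncommCoprod (C2hom PT PT_sq) (by
    intro m n
    have h : Commute (Pu k) (C2hom PT PT_sq n) := by
      rcases (by decide : ∀ z : Multiplicative (ZMod 2), z = 1 ∨ z = Multiplicative.ofAdd 1) n
        with rfl | rfl
      · rw [map_one]; exact Commute.one_right _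
      · rw [C2hom_ofAdd_one]; exact comm_Pu_PT k
    exact h.zpow_left (Multiplicative.toAdd m))

@[simp] lemma f₂_t₂ : f₂ k (Multiplicative.ofAdd 1, 1) = Pu k := by
  show zpowersHom P (Pu k) (Multiplicative.ofAdd 1) * C2hom PT PT_sq 1 = Pu k
  rw [map_one (C2hom PT PT_sq), mul_one, zpowersHom_apply, toAdd_ofAdd, zpow_one]

@[simp] lemma f₂_t₁ : f₂ k (1, Multiplicative.ofAdd 1) = PT := by
  show zpowersHom P (Pu k) 1 * C2hom PT PT_sq (Multiplicative.ofAdd 1) = PT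
  rw [map_one (zpowersHom P (Pu k)), one_mul, C2hom_ofAdd_one]

lemma f₂_apply (m : Multiplicative ℤ) (n : Multiplicative (ZMod 2)) :
    f₂ k (m, n) = (Pu k) ^ (Multiplicative.toAdd m) * C2hom PT PT_sq n := rfl

end PushoutSide

/-! ### The semidirect product side -/

section GSide

open Multiplicative

variable (φ : (Multiplicative ℤ × Multiplicative (ZMod 2)) →* MulAut (FreeGroup (Fin 2)))

/-- The semidirect product. -/
abbrev GG := FreeGroup (Fin 2) ⋊[φ] (Multiplicative ℤ × Multiplicative (ZMod 2))

def Gx₁ : GG φ := SemidirectProduct.inl (FreeGroup.of 0)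
def Gx₂ : GG φ := SemidirectProduct.inl (FreeGroup.of 1)
def Gt₁ : GG φ := SemidirectProduct.inr (1, Multiplicative.ofAdd 1)
def Gt₂ : GG φ := SemidirectProduct.inr (Multiplicative.ofAdd 1, 1)

variable (k : ℤ)

/-- The central element `ξ = x₂⁻ᵏ t₂`. -/
def Gxi : GG φ := Gx₂ φ ^ (-k) * Gt₂ φ

lemma inr_conj (g : Multiplicative ℤ × Multiplicative (ZMod 2)) (n : FreeGroup (Fin 2)) :
    (SemidirectProduct.inr g : GG φ) * SemidirectProduct.inl n * (SemidirectProduct.inr g)⁻¹ =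
      SemidirectProduct.inl (φ g n) := by
  rw [← map_inv, ← SemidirectProduct.inl_aut]

lemma inr_mul_inl (g : Multiplicative ℤ × Multiplicative (ZMod 2)) (n : FreeGroup (Fin 2)) :
    (SemidirectProduct.inr g : GG φ) * SemidirectProduct.inl n =
      SemidirectProduct.inl (φ g n) * SemidirectProduct.inr g := by
  have h := inr_conj φ g n
  rwa [mul_inv_eq_iff_eq_mul] at h

lemma Gt₁_sq : Gt₁ φ * Gt₁ φ = 1 := by
  rw [Gt₁, ← map_mul]
  have h : (((1 : Multiplicative ℤ), ofAdd (1 : ZMod 2)) *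
      ((1 : Multiplicative ℤ), ofAdd (1 : ZMod 2))) = 1 := by
    have h2 : (ofAdd (1 : ZMod 2)) * ofAdd 1 = 1 := by decide
    simp [Prod.mk_mul_mk, h2]
  rw [h, map_one]

lemma Gt₁_inv : (Gt₁ φ)⁻¹ = Gt₁ φ := inv_eq_of_mul_eq_one_left (Gt₁_sq φ)

section Facts

variable {φ}

lemma comm_Gt₂_Gx₂ (a4 : φ (Multiplicative.ofAdd 1, 1) (FreeGroup.of 1) = FreeGroup.of 1) :
    Commute (Gt₂ φ) (Gx₂ φ) := by
  show Gt₂ φ * Gx₂ φ = Gx₂ φ * Gt₂ φ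
  rw [Gt₂, Gx₂, inr_mul_inl, a4]

lemma comm_Gt₁_Gx₂ (a2 : φ (1, Multiplicative.ofAdd 1) (FreeGroup.of 1) = FreeGroup.of 1) :
    Commute (Gt₁ φ) (Gx₂ φ) := by
  show Gt₁ φ * Gx₂ φ = Gx₂ φ * Gt₁ φ
  rw [Gt₁, Gx₂, inr_mul_inl, a2]

lemma comm_Gt₂_Gt₁ : Commute (Gt₂ φ) (Gt₁ φ) := by
  show Gt₂ φ * Gt₁ φ = Gt₁ φ * Gt₂ φ
  rw [Gt₂, Gt₁, ← map_mul, ← map_mul]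
  congr 1

lemma conj_Gt₂_Gx₁ (a3 : φ (Multiplicative.ofAdd 1, 1) (FreeGroup.of 0) =
      (FreeGroup.of 1) ^ k * FreeGroup.of 0 * ((FreeGroup.of 1) ^ k)⁻¹) :
    Gt₂ φ * Gx₁ φ * (Gt₂ φ)⁻¹ = Gx₂ φ ^ k * Gx₁ φ * (Gx₂ φ ^ k)⁻¹ := by
  rw [Gt₂, Gx₁, inr_conj, a3, map_mul, map_mul, map_inv, map_zpow]
  rfl

lemma conj_Gt₁_Gx₁ (a1 : φ (1, Multiplicative.ofAdd 1) (FreeGroup.of 0) = (FreeGroup.of 0)⁻¹) :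
    Gt₁ φ * Gx₁ φ * Gt₁ φ = (Gx₁ φ)⁻¹ := by
  have h : Gt₁ φ * Gx₁ φ * (Gt₁ φ)⁻¹ = (Gx₁ φ)⁻¹ := by
    rw [Gt₁, Gx₁, inr_conj, a1, map_inv]
  rwa [Gt₁_inv] at h

lemma comm_Gxi_Gx₂ (a4 : φ (Multiplicative.ofAdd 1, 1) (FreeGroup.of 1) = FreeGroup.of 1) :
    Commute (Gxi φ k) (Gx₂ φ) :=
  ((Commute.refl (Gx₂ φ)).zpow_left (-k)).mul_left (comm_Gt₂_Gx₂ a4)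

lemma comm_Gxi_Gx₁ (a3 : φ (Multiplicative.ofAdd 1, 1) (FreeGroup.of 0) =
      (FreeGroup.of 1) ^ k * FreeGroup.of 0 * ((FreeGroup.of 1) ^ k)⁻¹) :
    Commute (Gxi φ k) (Gx₁ φ) := by
  have h2 : Gxi φ k * Gx₁ φ * (Gxi φ k)⁻¹ = Gx₁ φ := by
    calc Gx₂ φ ^ (-k) * Gt₂ φ * Gx₁ φ * (Gx₂ φ ^ (-k) * Gt₂ φ)⁻¹
        = Gx₂ φ ^ (-k) * (Gt₂ φ * Gx₁ φ * (Gt₂ φ)⁻¹) * (Gx₂ φ ^ (-k))⁻¹ := by group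
      _ = Gx₂ φ ^ (-k) * (Gx₂ φ ^ k * Gx₁ φ * (Gx₂ φ ^ k)⁻¹) * (Gx₂ φ ^ (-k))⁻¹ := by
          rw [conj_Gt₂_Gx₁ k a3]
      _ = Gx₁ φ := by group
  rwa [mul_inv_eq_iff_eq_mul] at h2

lemma comm_Gxi_Gt₁ (a2 : φ (1, Multiplicative.ofAdd 1) (FreeGroup.of 1) = FreeGroup.of 1) :
    Commute (Gxi φ k) (Gt₁ φ) :=
  ((comm_Gt₁_Gx₂ a2).symm.zpow_left (-k)).mul_left (comm_Gt₂_Gt₁ (φ := φ))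

/-- The homomorphism `L₁ = ℤ × ℤ × ℤ/2 →* G`, `(a, b, s) ↦ ξᵃ x₂ᵇ t₁ˢ`. -/
def k₁hom (a2 : φ (1, Multiplicative.ofAdd 1) (FreeGroup.of 1) = FreeGroup.of 1)
    (a4 : φ (Multiplicative.ofAdd 1, 1) (FreeGroup.of 1) = FreeGroup.of 1) : L₁ →* GG φ :=
  ((zpowersHom _ (Gxi φ k)).noncommCoprod (zpowersHom _ (Gx₂ φ)) (fun m n => by
      exact ((comm_Gxi_Gx₂ k a4).zpow_left m.toAdd).zpow_right n.toAdd)).noncommCoprod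
    (C2hom (Gt₁ φ) (Gt₁_sq φ)) (by
      intro m n
      have hc : Commute (Gxi φ k ^ (Multiplicative.toAdd m.1) * Gx₂ φ ^ (Multiplicative.toAdd m.2))
          (Gt₁ φ) :=
        ((comm_Gxi_Gt₁ k a2).zpow_left _).mul_left (((comm_Gt₁_Gx₂ a2).symm.zpow_left _))
      have h : Commute (Gxi φ k ^ (Multiplicative.toAdd m.1) * Gx₂ φ ^ (Multiplicative.toAdd m.2))
          (C2hom (Gt₁ φ) (Gt₁_sq φ) n) := by
        rcases (by decide : ∀ z : Multiplicative (ZMod 2), z = 1 ∨ z = Multiplicative.ofAdd 1) n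
          with rfl | rfl
        · rw [map_one]; exact Commute.one_right _
        · rw [C2hom_ofAdd_one]; exact hc
      exact h)

lemma k₁hom_apply (a2 : φ (1, Multiplicative.ofAdd 1) (FreeGroup.of 1) = FreeGroup.of 1)
    (a4 : φ (Multiplicative.ofAdd 1, 1) (FreeGroup.of 1) = FreeGroup.of 1)
    (a b : Multiplicative ℤ) (s : Multiplicative (ZMod 2)) :
    k₁hom k a2 a4 ((a, b), s) =
      Gxi φ k ^ (Multiplicative.toAdd a) * Gx₂ φ ^ (Multiplicative.toAdd b) *
        C2hom (Gt₁ φ) (Gt₁_sq φ) s := rfl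

/-- The dihedral factor `D∞ →* G`. -/
def dh (a1 : φ (1, Multiplicative.ofAdd 1) (FreeGroup.of 0) = (FreeGroup.of 0)⁻¹) :
    DihedralGroup 0 →* GG φ :=
  dihedralHom (Gx₁ φ) (Gt₁ φ) (Gt₁_sq φ) (conj_Gt₁_Gx₁ a1)

lemma comm_Gxi_dh (a1 : φ (1, Multiplicative.ofAdd 1) (FreeGroup.of 0) = (FreeGroup.of 0)⁻¹)
    (a2 : φ (1, Multiplicative.ofAdd 1) (FreeGroup.of 1) = FreeGroup.of 1)
    (a3 : φ (Multiplicative.ofAdd 1, 1) (FreeGroup.of 0) =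
      (FreeGroup.of 1) ^ k * FreeGroup.of 0 * ((FreeGroup.of 1) ^ k)⁻¹)
    (d : DihedralGroup 0) : Commute (Gxi φ k) (dh a1 d) := by
  rcases d with i | i
  · rw [dh, dihedralHom_r]
    exact (comm_Gxi_Gx₁ k a3).zpow_right _
  · rw [dh, dihedralHom_sr]
    exact (comm_Gxi_Gt₁ k a2).mul_right ((comm_Gxi_Gx₁ k a3).zpow_right _)

/-- The homomorphism `L₂ = ℤ × D∞ →* G`, `(a, d) ↦ ξᵃ D(d)`. -/
def k₂hom (a1 : φ (1, Multiplicative.ofAdd 1) (FreeGroup.of 0) = (FreeGroup.of 0)⁻¹)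
    (a2 : φ (1, Multiplicative.ofAdd 1) (FreeGroup.of 1) = FreeGroup.of 1)
    (a3 : φ (Multiplicative.ofAdd 1, 1) (FreeGroup.of 0) =
      (FreeGroup.of 1) ^ k * FreeGroup.of 0 * ((FreeGroup.of 1) ^ k)⁻¹) : L₂ →* GG φ :=
  (zpowersHom _ (Gxi φ k)).noncommCoprod (dh a1) (fun m d => by
    exact (comm_Gxi_dh k a1 a2 a3 d).zpow_left m.toAdd)

lemma k₂hom_apply (a1 : φ (1, Multiplicative.ofAdd 1) (FreeGroup.of 0) = (FreeGroup.of 0)⁻¹)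
    (a2 : φ (1, Multiplicative.ofAdd 1) (FreeGroup.of 1) = FreeGroup.of 1)
    (a3 : φ (Multiplicative.ofAdd 1, 1) (FreeGroup.of 0) =
      (FreeGroup.of 1) ^ k * FreeGroup.of 0 * ((FreeGroup.of 1) ^ k)⁻¹)
    (a : Multiplicative ℤ) (d : DihedralGroup 0) :
    k₂hom k a1 a2 a3 (a, d) = Gxi φ k ^ (Multiplicative.toAdd a) * dh a1 d := rfl

/-- The homomorphism `L = ℤ × ℤ/2 →* G`, `(a, s) ↦ ξᵃ t₁ˢ`. -/
def kLhom (a2 : φ (1, Multiplicative.ofAdd 1) (FreeGroup.of 1) = FreeGroup.of 1) : L →* GG φ :=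
  (zpowersHom _ (Gxi φ k)).noncommCoprod (C2hom (Gt₁ φ) (Gt₁_sq φ)) (fun m n => by
    have h : Commute (Gxi φ k) (C2hom (Gt₁ φ) (Gt₁_sq φ) n) := by
      rcases (by decide : ∀ z : Multiplicative (ZMod 2), z = 1 ∨ z = Multiplicative.ofAdd 1) n
        with rfl | rfl
      · rw [map_one]; exact Commute.one_right _
      · rw [C2hom_ofAdd_one]; exact comm_Gxi_Gt₁ k a2
    exact h.zpow_left m.toAdd)

lemma kLhom_apply (a2 : φ (1, Multiplicative.ofAdd 1) (FreeGroup.of 1) = FreeGroup.of 1)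
    (a : Multiplicative ℤ) (s : Multiplicative (ZMod 2)) :
    kLhom k a2 (a, s) =
      Gxi φ k ^ (Multiplicative.toAdd a) * C2hom (Gt₁ φ) (Gt₁_sq φ) s := rfl

end Facts

end GSide

/-! ### Extensionality for homs out of `L` -/

lemma L_ext {H : Type*} [Group H] {f g : L →* H}
    (h1 : f (Multiplicative.ofAdd 1, 1) = g (Multiplicative.ofAdd 1, 1))
    (h2 : f (1, Multiplicative.ofAdd 1) = g (1, Multiplicative.ofAdd 1)) : f = g := by
  refine prodExtComp ?_ ?_
  · refine MonoidHom.ext_mint ?_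
    simpa using h1
  · refine C2hom_ext ?_
    simpa using h2

lemma jmap_true' (a : Multiplicative ℤ) (s : Multiplicative (ZMod 2)) :
    jmap true (a, s) = ((((a, 1), s) : L₁) : Fam L₁ L₂ true) := rfl

lemma jmap_false' (a : Multiplicative ℤ) (s : Multiplicative (ZMod 2)) :
    jmap false (a, s) = (((a, C2D s) : L₂) : Fam L₁ L₂ false) := rfl

/-! ### The two inverse homomorphisms -/

section Iso

open Multiplicative

variable {φ : (Multiplicative ℤ × Multiplicative (ZMod 2)) →* MulAut (FreeGroup (Fin 2))} (k : ℤ)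
variable (a1 : φ (1, Multiplicative.ofAdd 1) (FreeGroup.of 0) = (FreeGroup.of 0)⁻¹)
    (a2 : φ (1, Multiplicative.ofAdd 1) (FreeGroup.of 1) = FreeGroup.of 1)
    (a3 : φ (Multiplicative.ofAdd 1, 1) (FreeGroup.of 0) =
      (FreeGroup.of 1) ^ k * FreeGroup.of 0 * ((FreeGroup.of 1) ^ k)⁻¹)
    (a4 : φ (Multiplicative.ofAdd 1, 1) (FreeGroup.of 1) = FreeGroup.of 1)

lemma dh_r_one : dh a1 (.r 1) = Gx₁ φ := dihedralHom_r_one _ _ _ _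

lemma dh_sr_zero : dh a1 (.sr 0) = Gt₁ φ := dihedralHom_sr_zero _ _ _ _

/-- The family of homomorphisms out of the two vertex groups. -/
def kfam : ∀ b, Fam L₁ L₂ b →* GG φ
  | true => k₁hom k a2 a4
  | false => k₂hom k a1 a2 a3

lemma kfam_true : kfam k a1 a2 a3 a4 true = k₁hom k a2 a4 := rfl

lemma kfam_false : kfam k a1 a2 a3 a4 false = k₂hom k a1 a2 a3 := rfl

lemma hcomp : ∀ b, (kfam k a1 a2 a3 a4 b).comp (jmap b) = kLhom k a2 := by
  intro b
  cases b
  · -- b = false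
    refine L_ext ?_ ?_
    · rw [MonoidHom.comp_apply, jmap_false', kfam_false]
      show k₂hom k a1 a2 a3 (Multiplicative.ofAdd 1, C2D 1) =
        kLhom k a2 (Multiplicative.ofAdd 1, 1)
      rw [k₂hom_apply, kLhom_apply]
      simp [C2D_one]
    · rw [MonoidHom.comp_apply, jmap_false', kfam_false]
      show k₂hom k a1 a2 a3 (1, C2D (Multiplicative.ofAdd 1)) =
        kLhom k a2 (1, Multiplicative.ofAdd 1)
      rw [k₂hom_apply, kLhom_apply]
      simp [C2D_ofAdd_one, dh_sr_zero]
  · -- b = true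
    refine L_ext ?_ ?_
    · rw [MonoidHom.comp_apply, jmap_true', kfam_true]
      show k₁hom k a2 a4 ((Multiplicative.ofAdd 1, 1), 1) =
        kLhom k a2 (Multiplicative.ofAdd 1, 1)
      rw [k₁hom_apply, kLhom_apply]
      simp
    · rw [MonoidHom.comp_apply, jmap_true', kfam_true]
      show k₁hom k a2 a4 ((1, 1), Multiplicative.ofAdd 1) =
        kLhom k a2 (1, Multiplicative.ofAdd 1)
      rw [k₁hom_apply, kLhom_apply]
      simp

/-- The homomorphism from the pushout to the semidirect product. -/
def Psi : P →* GG φ :=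
  Monoid.PushoutI.lift (kfam k a1 a2 a3 a4) (kLhom k a2) (hcomp k a1 a2 a3 a4)

lemma Psi_PX₁ : Psi k a1 a2 a3 a4 PX₁ = Gx₁ φ := by
  rw [PX₁, Psi]
  refine (Monoid.PushoutI.lift_of ..).trans ?_
  show k₂hom k a1 a2 a3 (1, DihedralGroup.r 1) = Gx₁ φ
  rw [k₂hom_apply, dh_r_one]
  simp

lemma Psi_PX₂ : Psi k a1 a2 a3 a4 PX₂ = Gx₂ φ := by
  rw [PX₂, Psi]
  refine (Monoid.PushoutI.lift_of ..).trans ?_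
  show k₁hom k a2 a4 ((1, Multiplicative.ofAdd 1), 1) = Gx₂ φ
  rw [k₁hom_apply]
  simp

lemma Psi_PXi : Psi k a1 a2 a3 a4 PXi = Gxi φ k := by
  rw [PXi, Psi]
  refine (Monoid.PushoutI.lift_of ..).trans ?_
  show k₁hom k a2 a4 ((Multiplicative.ofAdd 1, 1), 1) = Gxi φ k
  rw [k₁hom_apply]
  simp

lemma Psi_PT : Psi k a1 a2 a3 a4 PT = Gt₁ φ := by
  rw [PT, Psi]
  refine (Monoid.PushoutI.lift_of ..).trans ?_
  show k₁hom k a2 a4 ((1, 1), Multiplicative.ofAdd 1) = Gt₁ φ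
  rw [k₁hom_apply]
  simp

/-! The compatibility condition for the semidirect product lift. -/

include a1 a2 a3 a4 in
lemma compat_pointwise (g : Multiplicative ℤ × Multiplicative (ZMod 2)) (n : FreeGroup (Fin 2)) :
    f₁ (φ g n) = f₂ k g * f₁ n * (f₂ k g)⁻¹ := by
  have key1 : f₁.comp ((φ (Multiplicative.ofAdd 1, 1)).toMonoidHom) =
      (MulAut.conj (Pu k)).toMonoidHom.comp f₁ := by
    refine FreeGroup.ext_hom _ _ fun i => ?_
    simp only [MonoidHom.comp_apply, MulEquiv.coe_toMonoidHom, MulAut.conj_apply]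
    rcases (by decide : ∀ z : Fin 2, z = 0 ∨ z = 1) i with rfl | rfl
    · rw [a3, map_mul, map_mul, map_inv, map_zpow, f₁_of_zero, f₁_of_one, Pu]
      have h5 : PXi * PX₁ * PXi⁻¹ = PX₁ := by rw [comm_PXi_PX₁.eq, mul_inv_cancel_right]
      calc PX₂ ^ k * PX₁ * (PX₂ ^ k)⁻¹
          = PX₂ ^ k * (PXi * PX₁ * PXi⁻¹) * (PX₂ ^ k)⁻¹ := by rw [h5]
        _ = PX₂ ^ k * PXi * PX₁ * (PX₂ ^ k * PXi)⁻¹ := by group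
    · rw [a4, f₁_of_one, (comm_Pu_PX₂ k).eq, mul_inv_cancel_right]
  have key2 : f₁.comp ((φ (1, Multiplicative.ofAdd 1)).toMonoidHom) =
      (MulAut.conj PT).toMonoidHom.comp f₁ := by
    refine FreeGroup.ext_hom _ _ fun i => ?_
    simp only [MonoidHom.comp_apply, MulEquiv.coe_toMonoidHom, MulAut.conj_apply]
    rcases (by decide : ∀ z : Fin 2, z = 0 ∨ z = 1) i with rfl | rfl
    · rw [a1, map_inv, f₁_of_zero, PT_false, PX₁, of_false_inv, of_false_inv, of_false_mul,
        of_false_mul]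
      congr 1
    · rw [a2, f₁_of_one, comm_PX₂_PT.symm.eq, mul_inv_cancel_right]
  set S : Subgroup (Multiplicative ℤ × Multiplicative (ZMod 2)) :=
    { carrier := {q | ∀ m, f₁ (φ q m) = f₂ k q * f₁ m * (f₂ k q)⁻¹}
      one_mem' := by
        intro m
        simp
      mul_mem' := by
        intro a b ha hb m
        have h1 : φ (a * b) m = φ a (φ b m) := by rw [map_mul]; rfl
        rw [h1, ha, hb, map_mul, mul_inv_rev]
        group
      inv_mem' := by
        intro a ha m
        have h2 : φ a (φ a⁻¹ m) = m := by
          rw [← MulAut.mul_apply, ← map_mul, mul_inv_cancel, map_one, MulAut.one_apply]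
        have h := ha (φ a⁻¹ m)
        rw [h2] at h
        rw [map_inv (f₂ k) a, inv_inv, h]
        simp [mul_assoc] } with hS
  have hgen1 : ((Multiplicative.ofAdd 1, 1) : Multiplicative ℤ × Multiplicative (ZMod 2)) ∈ S := by
    intro m
    have h := DFunLike.congr_fun key1 m
    simp only [MonoidHom.comp_apply, MulEquiv.coe_toMonoidHom, MulAut.conj_apply] at h
    rw [f₂_t₂]
    exact h
  have hgen2 : (((1 : Multiplicative ℤ), Multiplicative.ofAdd 1) :
      Multiplicative ℤ × Multiplicative (ZMod 2)) ∈ S := by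
    intro m
    have h := DFunLike.congr_fun key2 m
    simp only [MonoidHom.comp_apply, MulEquiv.coe_toMonoidHom, MulAut.conj_apply] at h
    rw [f₂_t₁]
    exact h
  have hall : ∀ q, q ∈ S := by
    rintro ⟨a, s⟩
    have hrep1 : ((a, (1 : Multiplicative (ZMod 2))) :
        Multiplicative ℤ × Multiplicative (ZMod 2)) =
        ((Multiplicative.ofAdd 1, 1) : Multiplicative ℤ × Multiplicative (ZMod 2)) ^
          (Multiplicative.toAdd a) := by
      have h := map_zpow (MonoidHom.inl (Multiplicative ℤ) (Multiplicative (ZMod 2)))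
        (Multiplicative.ofAdd 1) (Multiplicative.toAdd a)
      rw [zpow_ofAdd_one] at h
      simpa using h
    have hrep : ((a, s) : Multiplicative ℤ × Multiplicative (ZMod 2)) = (a, 1) * (1, s) := by
      simp [Prod.mk_mul_mk]
    rw [hrep]
    refine S.mul_mem ?_ ?_
    · rw [hrep1]
      exact S.zpow_mem hgen1 _
    · rcases (by decide : ∀ z : Multiplicative (ZMod 2), z = 1 ∨ z = Multiplicative.ofAdd 1) s
        with rfl | rfl
      · exact S.one_mem
      · exact hgen2
  exact hall g n

include a1 a2 a3 a4 in
lemma compat : ∀ g, f₁.comp ((φ g).toMonoidHom) =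
    (MulAut.conj (f₂ k g)).toMonoidHom.comp f₁ := by
  intro g
  refine MonoidHom.ext fun n => ?_
  simp only [MonoidHom.comp_apply, MulEquiv.coe_toMonoidHom, MulAut.conj_apply]
  exact compat_pointwise k a1 a2 a3 a4 g n

/-- The homomorphism from the semidirect product to the pushout. -/
def Phi : GG φ →* P :=
  SemidirectProduct.lift f₁ (f₂ k) (compat k a1 a2 a3 a4)

lemma Phi_Gx₁ : Phi k a1 a2 a3 a4 (Gx₁ φ) = PX₁ := by
  rw [Gx₁, Phi, SemidirectProduct.lift_inl, f₁_of_zero]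

lemma Phi_Gx₂ : Phi k a1 a2 a3 a4 (Gx₂ φ) = PX₂ := by
  rw [Gx₂, Phi, SemidirectProduct.lift_inl, f₁_of_one]

lemma Phi_Gt₁ : Phi k a1 a2 a3 a4 (Gt₁ φ) = PT := by
  rw [Gt₁, Phi, SemidirectProduct.lift_inr, f₂_t₁]

lemma Phi_Gt₂ : Phi k a1 a2 a3 a4 (Gt₂ φ) = Pu k := by
  rw [Gt₂, Phi, SemidirectProduct.lift_inr, f₂_t₂]

lemma Phi_Gxi : Phi k a1 a2 a3 a4 (Gxi φ k) = PXi := by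
  rw [Gxi, map_mul, map_zpow, Phi_Gx₂, Phi_Gt₂, Pu]
  group

lemma Psi_of_false_xi :
    Psi k a1 a2 a3 a4 (Monoid.PushoutI.of (φ := jmap) false
      (((Multiplicative.ofAdd 1, 1) : L₂) : Fam L₁ L₂ false)) = Gxi φ k := by
  rw [Psi]
  refine (Monoid.PushoutI.lift_of ..).trans ?_
  show k₂hom k a1 a2 a3 (Multiplicative.ofAdd 1, 1) = Gxi φ k
  rw [k₂hom_apply]
  simp

end Iso

/-- Let `G = F₂ ⋊ (ℤ × ℤ/2ℤ)` where the generator `t₁` of `ℤ/2ℤ` acts by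
`x₁ ↦ x₁⁻¹, x₂ ↦ x₂` and the generator `t₂` of `ℤ` acts by `x₁ ↦ x₂ᵏ x₁ x₂⁻ᵏ, x₂ ↦ x₂`.
Then `G` is an amalgamated free product `L₁ *_L L₂` with `L₁ ≅ ℤ² × ℤ/2ℤ`,
`L₂ ≅ ℤ × D∞` and `L ≅ ℤ × ℤ/2ℤ` embedded in both factors. -/
theorem semidirect_iso_amalgam (k : ℤ)
    (φ : (Multiplicative ℤ × Multiplicative (ZMod 2)) →* MulAut (FreeGroup (Fin 2)))
    (ht₁x₁ : φ (1, Multiplicative.ofAdd 1) (FreeGroup.of 0) = (FreeGroup.of 0)⁻¹)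
    (ht₁x₂ : φ (1, Multiplicative.ofAdd 1) (FreeGroup.of 1) = FreeGroup.of 1)
    (ht₂x₁ : φ (Multiplicative.ofAdd 1, 1) (FreeGroup.of 0) =
      (FreeGroup.of 1) ^ k * FreeGroup.of 0 * ((FreeGroup.of 1) ^ k)⁻¹)
    (ht₂x₂ : φ (Multiplicative.ofAdd 1, 1) (FreeGroup.of 1) = FreeGroup.of 1) :
    ∃ j : ∀ b, L →* Fam L₁ L₂ b,
      (∀ b, Function.Injective (j b)) ∧
      Nonempty ((FreeGroup (Fin 2) ⋊[φ] (Multiplicative ℤ × Multiplicative (ZMod 2))) ≃*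
        Monoid.PushoutI j) := by
  refine ⟨jmap, jmap_inj, ⟨?_⟩⟩
  refine MonoidHom.toMulEquiv (Phi k ht₁x₁ ht₁x₂ ht₂x₁ ht₂x₂) (Psi k ht₁x₁ ht₁x₂ ht₂x₁ ht₂x₂)
    ?_ ?_
  · -- `Ψ ∘ Φ = id`
    refine SemidirectProduct.hom_ext ?_ ?_
    · refine FreeGroup.ext_hom _ _ fun i => ?_
      rcases (by decide : ∀ z : Fin 2, z = 0 ∨ z = 1) i with rfl | rfl
      · show Psi k ht₁x₁ ht₁x₂ ht₂x₁ ht₂x₂ (Phi k ht₁x₁ ht₁x₂ ht₂x₁ ht₂x₂ (Gx₁ φ)) = Gx₁ φ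
        rw [Phi_Gx₁, Psi_PX₁]
      · show Psi k ht₁x₁ ht₁x₂ ht₂x₁ ht₂x₂ (Phi k ht₁x₁ ht₁x₂ ht₂x₁ ht₂x₂ (Gx₂ φ)) = Gx₂ φ
        rw [Phi_Gx₂, Psi_PX₂]
    · refine L_ext ?_ ?_
      · show Psi k ht₁x₁ ht₁x₂ ht₂x₁ ht₂x₂ (Phi k ht₁x₁ ht₁x₂ ht₂x₁ ht₂x₂ (Gt₂ φ)) = Gt₂ φ
        rw [Phi_Gt₂, Pu, map_mul, map_zpow, Psi_PX₂, Psi_PXi, Gxi]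
        group
      · show Psi k ht₁x₁ ht₁x₂ ht₂x₁ ht₂x₂ (Phi k ht₁x₁ ht₁x₂ ht₂x₁ ht₂x₂ (Gt₁ φ)) = Gt₁ φ
        rw [Phi_Gt₁, Psi_PT]
  · -- `Φ ∘ Ψ = id`
    refine Monoid.PushoutI.hom_ext_nonempty fun b => ?_
    cases b
    · -- `b = false`, i.e. the `L₂` component
      refine prodExtComp ?_ ?_
      · refine MonoidHom.ext_mint ?_
        show Phi k ht₁x₁ ht₁x₂ ht₂x₁ ht₂x₂ (Psi k ht₁x₁ ht₁x₂ ht₂x₁ ht₂x₂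
            (Monoid.PushoutI.of (φ := jmap) false
              (((Multiplicative.ofAdd 1, 1) : L₂) : Fam L₁ L₂ false))) =
          Monoid.PushoutI.of (φ := jmap) false
            (((Multiplicative.ofAdd 1, 1) : L₂) : Fam L₁ L₂ false)
        rw [Psi_of_false_xi, Phi_Gxi]
        exact PXi_false
      · refine dihedral_ext ?_ ?_
        · show Phi k ht₁x₁ ht₁x₂ ht₂x₁ ht₂x₂ (Psi k ht₁x₁ ht₁x₂ ht₂x₁ ht₂x₂ PX₁) = PX₁
          rw [Psi_PX₁, Phi_Gx₁]
        · show Phi k ht₁x₁ ht₁x₂ ht₂x₁ ht₂x₂ (Psi k ht₁x₁ ht₁x₂ ht₂x₁ ht₂x₂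
              (Monoid.PushoutI.of (φ := jmap) false
                ((((1 : Multiplicative ℤ), DihedralGroup.sr 0) : L₂) : Fam L₁ L₂ false))) =
            Monoid.PushoutI.of (φ := jmap) false
              ((((1 : Multiplicative ℤ), DihedralGroup.sr 0) : L₂) : Fam L₁ L₂ false)
          rw [← PT_false, Psi_PT, Phi_Gt₁]
    · -- `b = true`, i.e. the `L₁` component
      refine prodExtComp ?_ ?_
      · refine prodExtComp ?_ ?_
        · refine MonoidHom.ext_mint ?_
          show Phi k ht₁x₁ ht₁x₂ ht₂x₁ ht₂x₂ (Psi k ht₁x₁ ht₁x₂ ht₂x₁ ht₂x₂ PXi) = PXi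
          rw [Psi_PXi, Phi_Gxi]
        · refine MonoidHom.ext_mint ?_
          show Phi k ht₁x₁ ht₁x₂ ht₂x₁ ht₂x₂ (Psi k ht₁x₁ ht₁x₂ ht₂x₁ ht₂x₂ PX₂) = PX₂
          rw [Psi_PX₂, Phi_Gx₂]
      · refine C2hom_ext ?_
        show Phi k ht₁x₁ ht₁x₂ ht₂x₁ ht₂x₂ (Psi k ht₁x₁ ht₁x₂ ht₂x₁ ht₂x₂ PT) = PT
        rw [Psi_PT, Phi_Gt₁]

end Stmt9
end

section
/- Let FP be the Formanek–Procesi group with presentation ⟨α₁, α₂, α₃, φ₁, φ₂ | φᵢ αⱼ φᵢ⁻¹ = αⱼ, φᵢ α₃ φᵢ⁻¹ = α₃ αᵢ for i, j = 1, 2⟩. Then the subgroup of FP generated by α₁ and φ₁ is isomorphic to ℤ × ℤ. -/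
namespace Stmt10

/-- Generators of the Formanek–Procesi group: `0,1,2 = α₁,α₂,α₃`, `3,4 = φ₁,φ₂`. -/
abbrev α₁ : FreeGroup (Fin 5) := FreeGroup.of 0
abbrev α₂ : FreeGroup (Fin 5) := FreeGroup.of 1
abbrev α₃ : FreeGroup (Fin 5) := FreeGroup.of 2
abbrev φ₁ : FreeGroup (Fin 5) := FreeGroup.of 3
abbrev φ₂ : FreeGroup (Fin 5) := FreeGroup.of 4

/-- Relators: `φᵢ αⱼ φᵢ⁻¹ = αⱼ` and `φᵢ α₃ φᵢ⁻¹ = α₃ αᵢ` for `i, j = 1, 2`. -/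
def rels : Set (FreeGroup (Fin 5)) :=
  {φ₁ * α₁ * φ₁⁻¹ * α₁⁻¹, φ₁ * α₂ * φ₁⁻¹ * α₂⁻¹,
   φ₂ * α₁ * φ₂⁻¹ * α₁⁻¹, φ₂ * α₂ * φ₂⁻¹ * α₂⁻¹,
   φ₁ * α₃ * φ₁⁻¹ * (α₃ * α₁)⁻¹, φ₂ * α₃ * φ₂⁻¹ * (α₃ * α₂)⁻¹}

/-- The Formanek–Procesi group. -/
abbrev FP := PresentedGroup rels

/-- The shear automorphism `(x, y) ↦ (x + y, y)` of `ℤ × ℤ`. -/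
def shear : ℤ × ℤ ≃+ ℤ × ℤ where
  toFun p := (p.1 + p.2, p.2)
  invFun p := (p.1 - p.2, p.2)
  left_inv p := by simp
  right_inv p := by simp
  map_add' p q := by simp [Prod.ext_iff]; ring

def A : Multiplicative (ℤ × ℤ) ≃* Multiplicative (ℤ × ℤ) := AddEquiv.toMultiplicative shear

def φA : Multiplicative ℤ →* MulAut (Multiplicative (ℤ × ℤ)) := zpowersHom _ A

/-- Heisenberg-like group, as a semidirect product. -/
abbrev H := Multiplicative (ℤ × ℤ) ⋊[φA] Multiplicative ℤ

def aH : H := SemidirectProduct.inl (Multiplicative.ofAdd ((1 : ℤ), (0 : ℤ)))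
def tH : H := SemidirectProduct.inl (Multiplicative.ofAdd ((0 : ℤ), (1 : ℤ)))
def sH : H := SemidirectProduct.inr (Multiplicative.ofAdd (1 : ℤ))

def fgen : Fin 5 → H := ![aH, 1, tH, sH, 1]

lemma φA_one : φA (Multiplicative.ofAdd (1 : ℤ)) = A := by
  simp [φA]

lemma s_conj (x : Multiplicative (ℤ × ℤ)) :
    sH * SemidirectProduct.inl x * sH⁻¹ = SemidirectProduct.inl (A x) := by
  rw [sH, ← φA_one, SemidirectProduct.inl_aut, map_inv]

lemma hinv (x : Multiplicative (ℤ × ℤ)) :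
    (SemidirectProduct.inl (φ := φA) x)⁻¹ = SemidirectProduct.inl x⁻¹ :=
  (map_inv _ x).symm

lemma hmul (x y : Multiplicative (ℤ × ℤ)) :
    SemidirectProduct.inl (φ := φA) x * SemidirectProduct.inl y = SemidirectProduct.inl (x * y) :=
  (map_mul _ x y).symm

lemma hrels : ∀ r ∈ rels, FreeGroup.lift fgen r = 1 := by
  intro r hr
  have key : ∀ x : Multiplicative (ℤ × ℤ),
      sH * SemidirectProduct.inl x * sH⁻¹ = SemidirectProduct.inl (A x) := s_conj
  rcases hr with h | h | h | h | h | h <;> subst h <;>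
    simp only [map_mul, map_inv, FreeGroup.lift_apply_of, fgen, Matrix.cons_val_zero,
      Matrix.cons_val_one, Matrix.head_cons, Matrix.cons_val_fin_one] <;>
    try simp
  · rw [aH, key, hinv, hmul]
    exact (map_eq_one_iff _ SemidirectProduct.inl_injective).mpr (by decide)
  · rw [tH, key, aH, hinv, hinv, hmul, hmul]
    exact (map_eq_one_iff _ SemidirectProduct.inl_injective).mpr (by decide)

/-- The induced homomorphism `FP →* H`. -/
def F : FP →* H := PresentedGroup.toGroup hrels

lemma F_of (i : Fin 5) : F (PresentedGroup.of i) = fgen i := PresentedGroup.toGroup.of hrels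

lemma mk_rel {r : FreeGroup (Fin 5)} (hr : r ∈ rels) : PresentedGroup.mk rels r = 1 :=
  (QuotientGroup.eq_one_iff _).mpr (Subgroup.subset_normalClosure hr)

/-- abbreviations for the two relevant generators of `FP` -/
noncomputable def x0 : FP := PresentedGroup.of 0
noncomputable def y0 : FP := PresentedGroup.of 3

lemma comm_xy : Commute x0 y0 := by
  have h := mk_rel (show φ₁ * α₁ * φ₁⁻¹ * α₁⁻¹ ∈ rels from Set.mem_insert _ _)
  simp only [map_mul, map_inv] at h
  have h1 : PresentedGroup.mk rels φ₁ * PresentedGroup.mk rels α₁ *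
      (PresentedGroup.mk rels φ₁)⁻¹ = PresentedGroup.mk rels α₁ := by
    rwa [mul_inv_eq_one] at h
  rw [mul_inv_eq_iff_eq_mul] at h1
  exact (h1.symm : Commute _ _)

noncomputable def g : Multiplicative ℤ × Multiplicative ℤ →* FP :=
  (zpowersHom FP x0).noncommCoprod (zpowersHom FP y0)
    (fun _ _ => Commute.zpow_zpow comm_xy _ _)

lemma g_apply (p : Multiplicative ℤ × Multiplicative ℤ) :
    g p = x0 ^ p.1.toAdd * y0 ^ p.2.toAdd := by
  rfl

lemma F_x0 : F x0 = aH := F_of 0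
lemma F_y0 : F y0 = sH := F_of 3

lemma g_inj : Function.Injective g := by
  rw [injective_iff_map_eq_one]
  intro p hp
  have h1 : F (g p) = 1 := by rw [hp, map_one]
  rw [g_apply, map_mul, map_zpow, map_zpow, F_x0, F_y0] at h1
  have hl := congrArg SemidirectProduct.left h1
  have hr := congrArg SemidirectProduct.right h1
  simp only [aH, sH, ← map_zpow, SemidirectProduct.mul_left, SemidirectProduct.mul_right,
    SemidirectProduct.left_inl, SemidirectProduct.right_inl, SemidirectProduct.left_inr,
    SemidirectProduct.right_inr, SemidirectProduct.one_left, SemidirectProduct.one_right,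
    map_one, mul_one, one_mul] at hl hr
  -- hl : ofAdd (1,0) ^ p.1.toAdd = 1 , hr : ofAdd 1 ^ p.2.toAdd = 1
  have hm : p.1.toAdd = 0 := by
    have := congrArg Multiplicative.toAdd hl
    simp only [toAdd_zpow, toAdd_ofAdd, toAdd_one, smul_zero, Prod.smul_mk, smul_eq_mul,
      mul_one, Prod.mk_eq_zero] at this
    exact this.1
  have hn : p.2.toAdd = 0 := by
    have := congrArg Multiplicative.toAdd hr
    simpa using this
  ext
  · simpa using hm
  · simpa using hn

lemma g_range : g.range = Subgroup.closure {x0, y0} := by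
  apply le_antisymm
  · rintro z hz
    obtain ⟨p, rfl⟩ := MonoidHom.mem_range.mp hz
    rw [g_apply]
    have h1 : x0 ∈ Subgroup.closure {x0, y0} := Subgroup.subset_closure (Set.mem_insert _ _)
    have h2 : y0 ∈ Subgroup.closure {x0, y0} :=
      Subgroup.subset_closure (Set.mem_insert_of_mem _ rfl)
    exact mul_mem (zpow_mem h1 _) (zpow_mem h2 _)
  · rw [Subgroup.closure_le]
    rintro z (rfl | rfl)
    · refine ⟨(Multiplicative.ofAdd 1, 1), ?_⟩
      rw [g_apply]; simp
    · refine ⟨(1, Multiplicative.ofAdd 1), ?_⟩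
      rw [g_apply]; simp

/-- the subgroup of `FP` generated by `α₁` and `φ₁` is isomorphic to `ℤ × ℤ`. -/
theorem closure_alpha1_phi1_iso_int_times_int :
    Nonempty ((Subgroup.closure {PresentedGroup.of (rels := rels) 0,
      PresentedGroup.of (rels := rels) 3} : Subgroup FP) ≃*
      Multiplicative ℤ × Multiplicative ℤ) := by
  have h : (Subgroup.closure {PresentedGroup.of (rels := rels) 0,
      PresentedGroup.of (rels := rels) 3} : Subgroup FP) = g.range := g_range.symm
  exact ⟨(MulEquiv.subgroupCongr h).trans (MonoidHom.ofInjective g_inj).symm⟩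

end Stmt10
end
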